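/- Let k be a perfect field of characteristic p > 0, f ≥ 1 an integer, and for each i ∈ ℤ/fℤ let E_i be a finite-dimensional k-vector space with dim_k E_i = h₀. For each i let F_i : E_{i−1} → E_i be an additive map with F_i(a·x) = a^p·F_i(x), and V_i : E_i → E_{i−1} an additive map with V_i(a^p·x) = a·V_i(x), for all a ∈ k. Assume that for every i: ker F_i = range V_i (as subspaces of E_{i−1}) and ker V_i = range F_i (as subspaces of E_i). Set ω_i := ker F_{i+1} ⊆ E_i, and assume dim_k ω_i = d₀ for all i, with 0 < d₀ < h₀. Then for each i: (i) V_i maps ω_i into ω_{i−1}, and F_i induces an additive map F̄_i : E_{i−1}/ω_{i−1} → E_i/ω_i; (ii) the restriction V_i|_{ω_i} : ω_i → ω_{i−1} is bijective if and only if F̄_i : E_{i−1}/ω_{i−1} → E_i/ω_i is bijective, and both conditions are equivalent to the internal direct sum decomposition E_i = ω_i ⊕ range F_i. (This is the compatibility of the i-th partial Hasse invariant with duality for a p-divisible group with unramified action: ha_i(G) is invertible exactly when ha_i(G^D) is.) -/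

import Mathlib

instance frobSurj (k : Type*) [Field k] (p : ℕ) [Fact p.Prime] [CharP k p] [PerfectRing k p] :
    RingHomSurjective (frobenius k p) :=
  ⟨(frobeniusEquiv k p).surjective⟩

instance frobSymmSurj (k : Type*) [Field k] (p : ℕ) [Fact p.Prime] [CharP k p]
    [PerfectRing k p] : RingHomSurjective ((frobeniusEquiv k p).symm : k →+* k) :=
  ⟨(frobeniusEquiv k p).symm.surjective⟩

/-!
All three conditions are equivalent to `ω (i+1) ⊓ range (F i) = ⊥`. Since
`ker (V i) = range (F i)`, this says that `V i` is injective on `ω (i+1)`, which it maps into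
`ω i = range (V i)`, of the same dimension. The kernel of `F̄ i` is `F i⁻¹ (ω (i+1))` modulo
`ω i`, and both quotients have dimension `h₀ - d₀`. Finally
`dim ω (i+1) + dim range (F i) = d₀ + (h₀ - d₀) = dim E (i+1)`. Semilinearity over a field
automorphism does not change any of these dimension counts.
-/

open Module Submodule LinearMap

section Semilinear

variable {K L : Type*} [Field K] [Field L] {σ : K →+* L} [RingHomSurjective σ]
  {M N : Type*} [AddCommGroup M] [Module K M] [AddCommGroup N] [Module L N]

theorem LinearMap.finrank_eq_of_bijective_semilinear {f : M →ₛₗ[σ] N}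
    (hf : Function.Bijective f) : finrank K M = finrank L N := by
  have := lift_rank_eq_of_equiv_equiv σ (AddEquiv.ofBijective f hf)
    ⟨σ.injective, RingHomSurjective.is_surjective⟩ f.map_smulₛₗ
  simpa only [finrank, Cardinal.toNat_lift] using congrArg Cardinal.toNat this

theorem LinearMap.finrank_range_add_finrank_ker_semilinear [FiniteDimensional K M]
    (f : M →ₛₗ[σ] N) : finrank L (range f) + finrank K (ker f) = finrank K M := by
  have hbij : Function.Bijective ((ker f).liftQ f.rangeRestrict (ker_rangeRestrict f).ge) :=
    ⟨ker_eq_bot.1 (ker_liftQ_eq_bot' _ _ (ker_rangeRestrict f).symm),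
      range_eq_top.1 (by rw [range_liftQ, range_rangeRestrict])⟩
  rw [← finrank_eq_of_bijective_semilinear hbij, finrank_quotient_add_finrank]

theorem LinearMap.finrank_range_of_injective_semilinear [FiniteDimensional K M]
    {f : M →ₛₗ[σ] N} (hf : Function.Injective f) : finrank L (range f) = finrank K M := by
  rw [← finrank_range_add_finrank_ker_semilinear f, ker_eq_bot.2 hf, finrank_bot, add_zero]

theorem LinearMap.bijective_of_injective_of_finrank_eq [FiniteDimensional K M]
    [FiniteDimensional L N] {f : M →ₛₗ[σ] N} (hf : Function.Injective f)
    (hdim : finrank K M = finrank L N) : Function.Bijective f :=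
  ⟨hf, range_eq_top.1 <| eq_top_of_finrank_eq <| by
    rw [finrank_range_of_injective_semilinear hf, hdim]⟩

theorem LinearMap.bijOn_iff_disjoint_ker [FiniteDimensional K M] [FiniteDimensional L N]
    {f : M →ₛₗ[σ] N} {p : Submodule K M} {q : Submodule L N} (hpq : Set.MapsTo f p q)
    (hdim : finrank K p = finrank L q) : Set.BijOn f p q ↔ Disjoint p (ker f) := by
  rw [disjoint_ker_iff_injOn]
  refine ⟨Set.BijOn.injOn, fun hinj => ⟨hpq, hinj, ?_⟩⟩
  have hmap : map f p = q := by
    refine eq_of_le_of_finrank_le (map_le_iff_le_comap.2 hpq) ?_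
    rw [← range_domRestrict, finrank_range_of_injective_semilinear
      (injective_domRestrict_iff.2 (disjoint_ker_iff_injOn.2 hinj)), hdim]
  rw [Set.SurjOn, ← hmap, map_coe]

theorem Submodule.injective_mapQ_ker_iff_disjoint {f : M →ₛₗ[σ] N} {q : Submodule L N} :
    Function.Injective ((ker f).mapQ q f (ker_le_comap f)) ↔ Disjoint q (range f) := by
  rw [injective_iff_map_eq_zero, disjoint_def, (Quotient.mk_surjective _).forall]
  simp only [mapQ_apply, Quotient.mk_eq_zero, mem_ker, mem_range]
  exact ⟨fun h _ hy ⟨x, hx⟩ => hx ▸ h x (hx ▸ hy), fun h x hx => h _ hx ⟨x, rfl⟩⟩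

theorem Submodule.bijective_mapQ_ker_iff_disjoint [FiniteDimensional K M] [FiniteDimensional L N]
    {f : M →ₛₗ[σ] N} {q : Submodule L N} (hker : finrank K (ker f) = finrank L q)
    (hdim : finrank K M = finrank L N) :
    Function.Bijective ((ker f).mapQ q f (ker_le_comap f)) ↔ Disjoint q (range f) := by
  rw [← injective_mapQ_ker_iff_disjoint]
  refine ⟨And.left, fun hinj => bijective_of_injective_of_finrank_eq hinj ?_⟩
  rw [finrank_quotient, finrank_quotient, hker, hdim]

theorem Submodule.isCompl_range_iff_disjoint [FiniteDimensional K M] [FiniteDimensional L N]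
    {f : M →ₛₗ[σ] N} {q : Submodule L N} (hker : finrank K (ker f) = finrank L q)
    (hdim : finrank K M = finrank L N) :
    IsCompl q (range f) ↔ Disjoint q (range f) :=
  isCompl_iff_disjoint _ _ <| by
    rw [← hker, add_comm, finrank_range_add_finrank_ker_semilinear, hdim]

end Semilinear

-- `F i` and `V i` are the paper's `F_{i+1}` and `V_{i+1}`, so `ω i = ker (F i)`.
theorem partial_hasse_invariant_duality_unramified
    (k : Type*) [Field k] (p : ℕ) [Fact p.Prime] [CharP k p] [PerfectRing k p]
    (f : ℕ) (h₀ d₀ : ℕ)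
    (E : ZMod f → Type*) [∀ i, AddCommGroup (E i)] [∀ i, Module k (E i)]
    [∀ i, FiniteDimensional k (E i)] (hE : ∀ i, Module.finrank k (E i) = h₀)
    (F : ∀ i : ZMod f, E i →ₛₗ[frobenius k p] E (i + 1))
    (V : ∀ i : ZMod f, E (i + 1) →ₛₗ[((frobeniusEquiv k p).symm : k →+* k)] E i)
    (hFV : ∀ i, LinearMap.ker (F i) = LinearMap.range (V i))
    (hVF : ∀ i, LinearMap.ker (V i) = LinearMap.range (F i))
    (hω : ∀ i, Module.finrank k (LinearMap.ker (F i)) = d₀) :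
    ∀ i : ZMod f,
      (∀ x ∈ LinearMap.ker (F (i + 1)), V i x ∈ LinearMap.ker (F i)) ∧
      ∃ Fbar : (E i ⧸ LinearMap.ker (F i)) →+ (E (i + 1) ⧸ LinearMap.ker (F (i + 1))),
        (∀ x : E i, Fbar (Submodule.Quotient.mk x) = Submodule.Quotient.mk (F i x)) ∧
        (Set.BijOn (V i) (LinearMap.ker (F (i + 1)) : Set (E (i + 1)))
            (LinearMap.ker (F i) : Set (E i)) ↔ Function.Bijective Fbar) ∧
        (Set.BijOn (V i) (LinearMap.ker (F (i + 1)) : Set (E (i + 1)))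
            (LinearMap.ker (F i) : Set (E i)) ↔
          IsCompl (LinearMap.ker (F (i + 1))) (LinearMap.range (F i))) := by
  intro i
  have hmaps : Set.MapsTo (V i) (ker (F (i + 1))) (ker (F i)) :=
    fun x _ => hFV i ▸ mem_range_self (V i) x
  have hdimω : finrank k (ker (F i)) = finrank k (ker (F (i + 1))) := by rw [hω, hω]
  have hdimE : finrank k (E i) = finrank k (E (i + 1)) := by rw [hE, hE]
  refine ⟨hmaps, ((ker (F i)).mapQ _ (F i) (ker_le_comap (F i))).toAddMonoidHom,
    mapQ_apply (ker (F i)) _ (F i) (h := ker_le_comap (F i)), ?_, ?_⟩ <;>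
    rw [bijOn_iff_disjoint_ker hmaps hdimω.symm, hVF]
  · exact (bijective_mapQ_ker_iff_disjoint hdimω hdimE).symm
  · exact (isCompl_range_iff_disjoint hdimω hdimE).symm
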